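/- Let G be a topologically Noetherian profinite group, and let Φ̂ : G × X → X be a continuous minimal equicontinuous action of G by homeomorphisms on a Cantor space X. Then the action is locally quasi-analytic. -/

import Mathlib

noncomputable section

open Set Topology

/-! ### The group of homeomorphisms -/

namespace Homeomorph

variable {X : Type*} [TopologicalSpace X]

@[simp] theorem inv_eq_symm (f : X ≃ₜ X) : f⁻¹ = f.symm := rfl

/-- The uniform topology (topology of uniform convergence, equivalently for a compact
metric space the compact-open topology) on the group of homeomorphisms of a compact
metric space, as the metric topology of the sup-metric. -/
instance instMetricSpaceHomeomorph {Y : Type*} [MetricSpace Y] [CompactSpace Y] :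
    MetricSpace (Y ≃ₜ Y) :=
  MetricSpace.induced (fun h => (⟨h, h.continuous⟩ : C(Y, Y)))
    (fun f g hfg => Homeomorph.ext fun x => congrFun (congrArg ContinuousMap.toFun hfg) x)
    inferInstance

end Homeomorph

namespace Homeomorph

variable {Y : Type*} [MetricSpace Y] [CompactSpace Y]

theorem dist_eq_contMap (f g : Y ≃ₜ Y) :
    dist f g = dist (⟨f, f.continuous⟩ : C(Y, Y)) (⟨g, g.continuous⟩ : C(Y, Y)) := rfl

theorem dist_apply_le (f g : Y ≃ₜ Y) (x : Y) : dist (f x) (g x) ≤ dist f g :=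
  ContinuousMap.dist_apply_le_dist (f := (⟨f, f.continuous⟩ : C(Y, Y)))
    (g := (⟨g, g.continuous⟩ : C(Y, Y))) x

theorem dist_lt_iff' (f g : Y ≃ₜ Y) {C : ℝ} (hC : 0 < C) :
    dist f g < C ↔ ∀ x : Y, dist (f x) (g x) < C := by
  rw [dist_eq_contMap, ContinuousMap.dist_lt_iff hC]
  rfl

instance : IsTopologicalGroup (Y ≃ₜ Y) where
  continuous_mul := by
    rw [Metric.continuous_iff]
    rintro ⟨f₀, g₀⟩ ε hε
    obtain ⟨δ₁, hδ₁, H₁⟩ := Metric.uniformContinuous_iff.mp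
      (CompactSpace.uniformContinuous_of_continuous f₀.continuous) (ε / 2) (by positivity)
    refine ⟨min δ₁ (ε / 2), by positivity, ?_⟩
    rintro ⟨f, g⟩ hd
    have hdf : dist f f₀ < ε / 2 := by
      have h' : dist f f₀ ≤ dist ((f, g)) ((f₀, g₀)) := by
        rw [Prod.dist_eq]; exact le_max_left _ _
      exact (h'.trans_lt hd).trans_le (min_le_right _ _)
    have hdg : dist g g₀ < δ₁ := by
      have h' : dist g g₀ ≤ dist ((f, g)) ((f₀, g₀)) := by
        rw [Prod.dist_eq]; exact le_max_right _ _
      exact (h'.trans_lt hd).trans_le (min_le_left _ _)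
    rw [dist_lt_iff' _ _ hε]
    intro x
    have h1 : dist (f (g x)) (f₀ (g x)) < ε / 2 :=
      lt_of_le_of_lt (dist_apply_le f f₀ (g x)) hdf
    have h2 : dist (f₀ (g x)) (f₀ (g₀ x)) < ε / 2 :=
      H₁ (lt_of_le_of_lt (dist_apply_le g g₀ x) hdg)
    calc dist ((f * g) x) ((f₀ * g₀) x) ≤ dist (f (g x)) (f₀ (g x)) + dist (f₀ (g x)) (f₀ (g₀ x)) :=
          dist_triangle _ _ _
      _ < ε / 2 + ε / 2 := by exact add_lt_add h1 h2
      _ = ε := by ring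
  continuous_inv := by
    rw [Metric.continuous_iff]
    intro f₀ ε hε
    obtain ⟨δ, hδ, H⟩ := Metric.uniformContinuous_iff.mp
      (CompactSpace.uniformContinuous_of_continuous f₀.symm.continuous) ε hε
    refine ⟨δ, hδ, ?_⟩
    intro g hdg
    rw [dist_lt_iff' _ _ hε]
    intro y
    have key : dist (g (g.symm y)) (f₀ (g.symm y)) < δ :=
      lt_of_le_of_lt (dist_apply_le g f₀ (g.symm y)) hdg
    have h2 := H key
    have h3 : dist (f₀.symm (g (g.symm y))) (f₀.symm (f₀ (g.symm y))) < ε := h2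
    rw [Homeomorph.apply_symm_apply, Homeomorph.symm_apply_apply] at h3
    rw [dist_comm] at h3
    simpa using h3
end Homeomorph

/-! ### Steinitz (supernatural) numbers -/

/-- A Steinitz number: a formal product of primes with exponents in `ℕ∞`. -/
def SteinitzNum : Type := Nat.Primes → ℕ∞

namespace SteinitzNum

/-- The Steinitz number associated to a natural number. -/
def ofNat (n : ℕ) : SteinitzNum := fun p => (n.factorization (p : ℕ) : ℕ∞)

/-- Multiplication of Steinitz numbers adds the exponents at each prime. -/
instance : Mul SteinitzNum := ⟨fun a b p => a p + b p⟩

/-- The least common multiple of a collection of positive integers, as a Steinitz number: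
its exponent at `p` is the supremum of the `p`-adic valuations of the elements. -/
def lcmSet (S : Set ℕ) : SteinitzNum := fun p => ⨆ n ∈ S, (n.factorization (p : ℕ) : ℕ∞)

/-- Two Steinitz numbers are asymptotically equivalent if they agree after multiplication
by positive integers. -/
def AsympEquiv (a b : SteinitzNum) : Prop :=
  ∃ n₀ m₀ : ℕ, 0 < n₀ ∧ 0 < m₀ ∧ ofNat n₀ * a = ofNat m₀ * b

/-- The prime spectrum of a Steinitz number: primes with nonzero exponent. -/
def primeSpectrum (a : SteinitzNum) : Set Nat.Primes := { p | a p ≠ 0 }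

/-- The finite prime spectrum: primes with finite nonzero exponent. -/
def finitePrimeSpectrum (a : SteinitzNum) : Set Nat.Primes := { p | a p ≠ 0 ∧ a p ≠ ⊤ }

/-- The infinite prime spectrum: primes with infinite exponent. -/
def infinitePrimeSpectrum (a : SteinitzNum) : Set Nat.Primes := { p | a p = ⊤ }

end SteinitzNum

/-! ### Steinitz orders for topological groups -/

/-- The Steinitz order of a topological group: the LCM of the orders of the finite
quotients `G/N` over open normal subgroups `N ⊆ G`. -/
def steinitzOrder (G : Type*) [Group G] [TopologicalSpace G] : SteinitzNum :=
  SteinitzNum.lcmSet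
    { n | ∃ N : Subgroup G, N.Normal ∧ IsOpen (N : Set G) ∧ n = Nat.card (G ⧸ N) }

/-- The Steinitz order of a subgroup `D` of a topological group `G`: the LCM of the
cardinalities `|D/(N ∩ D)|` over open normal subgroups `N ⊆ G`. -/
def steinitzOrderOfSubgroup {G : Type*} [Group G] [TopologicalSpace G] (D : Subgroup G) :
    SteinitzNum :=
  SteinitzNum.lcmSet
    { n | ∃ N : Subgroup G, N.Normal ∧ IsOpen (N : Set G) ∧
        n = Nat.card (↥D ⧸ (N.subgroupOf D)) }

/-- The relative Steinitz order of a subgroup `D` of a topological group `G`: the LCM of the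
cardinalities `|G/(N · D)|` over open normal subgroups `N ⊆ G`. -/
def steinitzRelativeOrder {G : Type*} [Group G] [TopologicalSpace G] (D : Subgroup G) :
    SteinitzNum :=
  SteinitzNum.lcmSet
    { n | ∃ N : Subgroup G, N.Normal ∧ IsOpen (N : Set G) ∧ n = Nat.card (G ⧸ (N ⊔ D)) }

/-- A profinite (compact Hausdorff totally disconnected) topological group is topologically
Noetherian if every increasing chain of closed subgroups has a maximal element. -/
def TopologicallyNoetherian (G : Type*) [Group G] [TopologicalSpace G] : Prop :=
  ∀ c : ℕ → Subgroup G, (∀ i, IsClosed (c i : Set G)) → Monotone c → ∃ i₀, ∀ i, c i ≤ c i₀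

/-! ### Cantor actions -/

section CantorActions

variable {X : Type*} [MetricSpace X] {Γ : Type*} [Group Γ]

/-- An action is minimal if every orbit is dense. -/
def IsMinimalAction (Φ : Γ →* (X ≃ₜ X)) : Prop :=
  ∀ x : X, Dense (Set.range fun g : Γ => Φ g x)

/-- An action is equicontinuous if it satisfies the uniform `ε`-`δ` condition with respect
to the metric. -/
def IsEquicontinuousAction (Φ : Γ →* (X ≃ₜ X)) : Prop :=
  ∀ ε : ℝ, 0 < ε → ∃ δ : ℝ, 0 < δ ∧
    ∀ x y : X, dist x y < δ → ∀ g : Γ, dist (Φ g x) (Φ g y) < ε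

variable [CompactSpace X]

/-- `G(Φ)`: the closure of the image of `Γ` in `Homeo(X)`, in the uniform topology. -/
def profiniteClosure (Φ : Γ →* (X ≃ₜ X)) : Subgroup (X ≃ₜ X) :=
  Φ.range.topologicalClosure

/-- The discriminant group: the isotropy subgroup of `G(Φ)` at `x`. -/
def discriminant (Φ : Γ →* (X ≃ₜ X)) (x : X) : Subgroup (profiniteClosure Φ) where
  carrier := { h | (h : X ≃ₜ X) x = x }
  one_mem' := rfl
  mul_mem' := by
    intro a b ha hb
    simp only [Set.mem_setOf_eq] at *
    show ((a : X ≃ₜ X) * (b : X ≃ₜ X)) x = x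
    rw [Homeomorph.mul_apply, hb, ha]
  inv_mem' := by
    intro a ha
    simp only [Set.mem_setOf_eq] at *
    show ((a : X ≃ₜ X)⁻¹) x = x
    rw [Homeomorph.inv_eq_symm]
    conv_lhs => rw [← ha]
    exact Homeomorph.symm_apply_apply _ _

/-- The Steinitz order `Π[G(Φ)]` of a Cantor action. -/
def steinitzOrderAction (Φ : Γ →* (X ≃ₜ X)) : SteinitzNum :=
  steinitzOrder ↥(profiniteClosure Φ)

/-- The Steinitz order `Π[D(Φ,x)]` of the discriminant of a Cantor action. -/
def steinitzOrderDisc (Φ : Γ →* (X ≃ₜ X)) (x : X) : SteinitzNum :=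
  steinitzOrderOfSubgroup (discriminant Φ x)

/-- The relative Steinitz order `Π[G(Φ) : D(Φ,x)]` of a Cantor action. -/
def steinitzOrderRel (Φ : Γ →* (X ≃ₜ X)) (x : X) : SteinitzNum :=
  steinitzRelativeOrder (discriminant Φ x)

end CantorActions

/-! ### Adapted sets, holonomy and return equivalence -/

section Adapted

variable {X : Type*} [MetricSpace X] {Γ : Type*} [Group Γ]

/-- A nonempty clopen subset `U ⊆ X` is adapted to the action `Φ` if every group element
either fixes `U` or moves it entirely off of itself. -/
def IsAdaptedSet (Φ : Γ →* (X ≃ₜ X)) (U : Set X) : Prop :=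
  U.Nonempty ∧ IsClopen U ∧ ∀ g : Γ, ((Φ g) '' U ∩ U).Nonempty → (Φ g) '' U = U

/-- The stabilizer subgroup `Γ_U` of an adapted set. -/
def adaptedStabilizer (Φ : Γ →* (X ≃ₜ X)) (U : Set X) : Subgroup Γ where
  carrier := { g | (Φ g) '' U = U }
  one_mem' := by simp; exact Set.image_id U
  mul_mem' := by
    intro a b ha hb
    simp only [Set.mem_setOf_eq] at *
    rw [map_mul]
    show ((Φ a) * (Φ b)) '' U = U
    have : (((Φ a) * (Φ b) : X ≃ₜ X) : X → X) = (Φ a) ∘ (Φ b) := rfl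
    rw [this, Set.image_comp, hb, ha]
  inv_mem' := by
    intro a ha
    simp only [Set.mem_setOf_eq] at *
    rw [map_inv, Homeomorph.inv_eq_symm]
    conv_lhs => rw [← ha]
    rw [← Set.image_comp]
    simp

/-- The homeomorphism of an invariant set induced by a homeomorphism of `X`. -/
def restrictHomeo (h : X ≃ₜ X) {U : Set X} (hU : h '' U = U) : U ≃ₜ U :=
  (h.image U).trans (Homeomorph.setCongr hU)

@[simp] theorem restrictHomeo_coe (h : X ≃ₜ X) {U : Set X} (hU : h '' U = U) (x : U) :
    (restrictHomeo h hU x : X) = h x := rfl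

/-- The holonomy homomorphism of an adapted set: restriction of the stabilizer to `U`. -/
def holonomyHom (Φ : Γ →* (X ≃ₜ X)) (U : Set X) :
    adaptedStabilizer Φ U →* (↥U ≃ₜ ↥U) where
  toFun g := restrictHomeo (Φ (g : Γ)) g.2
  map_one' := by
    ext x
    show ((restrictHomeo (Φ ((1 : adaptedStabilizer Φ U) : Γ)) _ x : X) = _)
    simp
  map_mul' := by
    intro a b
    ext x
    show ((restrictHomeo (Φ ((a * b : adaptedStabilizer Φ U) : Γ)) _ x : X) = _)
    simp only [restrictHomeo_coe, Subgroup.coe_mul, map_mul]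
    rfl

/-- The holonomy group `H_U` of an adapted set: the image of the stabilizer in `Homeo(U)`. -/
def holonomyGroup (Φ : Γ →* (X ≃ₜ X)) (U : Set X) : Subgroup (↥U ≃ₜ ↥U) :=
  (holonomyHom Φ U).range

end Adapted

/-- Two Cantor actions are return equivalent if they admit adapted sets whose holonomy
actions are isomorphic, via a homeomorphism between the adapted sets together with a
compatible isomorphism of the holonomy groups. -/
def ReturnEquivalent
    {X₁ : Type*} [MetricSpace X₁] {Γ₁ : Type*} [Group Γ₁]
    {X₂ : Type*} [MetricSpace X₂] {Γ₂ : Type*} [Group Γ₂]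
    (Φ₁ : Γ₁ →* (X₁ ≃ₜ X₁)) (Φ₂ : Γ₂ →* (X₂ ≃ₜ X₂)) : Prop :=
  ∃ (U₁ : Set X₁) (U₂ : Set X₂), IsAdaptedSet Φ₁ U₁ ∧ IsAdaptedSet Φ₂ U₂ ∧
    ∃ (h : ↥U₁ ≃ₜ ↥U₂) (θ : holonomyGroup Φ₁ U₁ ≃* holonomyGroup Φ₂ U₂),
      ∀ k : holonomyGroup Φ₁ U₁,
        ((θ k : ↥U₂ ≃ₜ ↥U₂)) = h.symm.trans (((k : ↥U₁ ≃ₜ ↥U₁)).trans h)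

section Regularity

variable {X : Type*} [MetricSpace X]

/-- An action of a group `H` on `X` through a homomorphism `ρ : H →* Homeo(X)` is locally
quasi-analytic if there is `ε > 0` so that for every nonempty open `U` of diameter less
than `ε`, any element acting as the identity on a nonempty open subset `V ⊆ U` with
`ρ g (V) = V` acts as the identity on all of `U`. -/
def IsLocallyQuasiAnalytic {H : Type*} [Group H] (ρ : H →* (X ≃ₜ X)) : Prop :=
  ∃ ε : ℝ, 0 < ε ∧ ∀ U : Set X, IsOpen U → U.Nonempty → Metric.diam U < ε →
    ∀ V : Set X, V ⊆ U → IsOpen V → V.Nonempty →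
      ∀ g : H, (ρ g) '' V = V → (∀ x ∈ V, ρ g x = x) → ∀ x ∈ U, ρ g x = x

variable [CompactSpace X] {Γ : Type*} [Group Γ]

/-- A Cantor action is stable if the induced action of `G(Φ)` on `X` is locally
quasi-analytic; otherwise it is wild. -/
def IsStableAction (Φ : Γ →* (X ≃ₜ X)) : Prop :=
  IsLocallyQuasiAnalytic (profiniteClosure Φ).subtype

/-- An action is topologically free if the set of points fixed by some nontrivial group
element is meagre. -/
def IsTopologicallyFree (Φ : Γ →* (X ≃ₜ X)) : Prop :=
  IsMeagre { x : X | ∃ g : Γ, g ≠ 1 ∧ Φ g x = x }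

end Regularity

/-!
If the action is not locally quasi-analytic, there are arbitrarily small open sets `V ⊆ U` and
elements fixing `V` pointwise but moving a point of `U`. By minimality and equicontinuity the
group moves any sufficiently small set into a given nonempty open set `W`, and conjugating by
the translating element yields a nonempty open `V'` whose pointwise stabilizer is strictly
larger than that of `W`. So the pointwise stabilizers of nonempty open sets, which are closed
subgroups, have no maximal member, contradicting the Noetherian property.
-/

theorem TopologicallyNoetherian.exists_maximal {G : Type*} [Group G] [TopologicalSpace G]
    (hG : TopologicallyNoetherian G) {S : Set (Subgroup G)}
    (hS : ∀ H ∈ S, IsClosed (H : Set G)) (hne : S.Nonempty) : ∃ H, Maximal (· ∈ S) H := by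
  by_contra! hmax
  obtain ⟨H₀, hH₀⟩ := hne
  choose! next hlt hnextS using fun H (hH : H ∈ S) => exists_gt_of_not_maximal hH (hmax H)
  set c : ℕ → Subgroup G := fun n => next^[n] H₀ with hc
  have hcS : ∀ n, c n ∈ S := by
    intro n
    induction n with
    | zero => exact hH₀
    | succ n ih => simpa only [hc, Function.iterate_succ_apply'] using hnextS _ ih
  have hc_lt : ∀ n, c n < c (n + 1) := by
    intro n
    simpa only [hc, Function.iterate_succ_apply'] using hlt _ (hcS n)
  obtain ⟨n, hn⟩ := hG c (fun n => hS _ (hcS n)) (monotone_nat_of_le_succ fun n => (hc_lt n).le)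
  exact (hc_lt n).not_ge (hn (n + 1))

namespace MonoidHom

variable {G X : Type*} [Group G] [TopologicalSpace X] (ρ : G →* (X ≃ₜ X))

def fixingSubgroup (S : Set X) : Subgroup G where
  carrier := {g | ∀ x ∈ S, ρ g x = x}
  one_mem' _ _ := by simp
  mul_mem' ha hb x hx := by rw [map_mul, Homeomorph.mul_apply, hb x hx, ha x hx]
  inv_mem' ha x hx := by
    rw [map_inv, Homeomorph.inv_eq_symm, Homeomorph.symm_apply_eq, ha x hx]

@[simp] theorem mem_fixingSubgroup {S : Set X} {g : G} :
    g ∈ ρ.fixingSubgroup S ↔ ∀ x ∈ S, ρ g x = x := Iff.rfl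

theorem fixingSubgroup_antitone : Antitone ρ.fixingSubgroup :=
  fun _ _ hST _ hg x hx => hg x (hST hx)

theorem conj_mem_fixingSubgroup_image_iff {S : Set X} {g : G} (h : G) :
    h * g * h⁻¹ ∈ ρ.fixingSubgroup (ρ h '' S) ↔ g ∈ ρ.fixingSubgroup S := by
  simp only [mem_fixingSubgroup, forall_mem_image, map_mul, map_inv, Homeomorph.mul_apply,
    Homeomorph.inv_eq_symm, Homeomorph.symm_apply_apply, (ρ h).injective.eq_iff]

theorem isClosed_fixingSubgroup [TopologicalSpace G] [T2Space X]
    (hcont : ∀ x, Continuous fun g : G => ρ g x) (S : Set X) :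
    IsClosed (ρ.fixingSubgroup S : Set G) := by
  have : (ρ.fixingSubgroup S : Set G) = ⋂ x ∈ S, {g | ρ g x = x} := by
    ext
    simp
  rw [this]
  exact isClosed_biInter fun x _ => isClosed_eq (hcont x) continuous_const

end MonoidHom

section CantorActions

variable {X Γ : Type*} [MetricSpace X] [Group Γ] {ρ : Γ →* (X ≃ₜ X)}

theorem IsMinimalAction.exists_image_ball_subset (hmin : IsMinimalAction ρ)
    (heqc : IsEquicontinuousAction ρ) {W : Set X} (hW : IsOpen W) (hne : W.Nonempty) :
    ∃ δ > 0, ∀ y, ∃ h, ρ h '' Metric.ball y δ ⊆ W := by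
  obtain ⟨x₀, hx₀⟩ := hne
  obtain ⟨r, hr, hball⟩ := Metric.isOpen_iff.mp hW x₀ hx₀
  obtain ⟨δ, hδ, hequi⟩ := heqc (r / 2) (half_pos hr)
  refine ⟨δ, hδ, fun y => ?_⟩
  obtain ⟨_, ⟨h, rfl⟩, hclose⟩ :=
    Metric.mem_closure_iff.mp (hmin y x₀) (r / 2) (half_pos hr)
  refine ⟨h, ?_⟩
  rintro _ ⟨u, hu, rfl⟩
  apply hball
  calc dist (ρ h u) x₀
      ≤ dist (ρ h u) (ρ h y) + dist x₀ (ρ h y) := dist_triangle_right _ _ _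
    _ < r / 2 + r / 2 := add_lt_add (hequi u y hu h) hclose
    _ = r := add_halves r

theorem exists_fixingSubgroup_lt_of_not_isLocallyQuasiAnalytic [CompactSpace X]
    (hmin : IsMinimalAction ρ) (heqc : IsEquicontinuousAction ρ)
    (hρ : ¬ IsLocallyQuasiAnalytic ρ) {W : Set X} (hW : IsOpen W) (hne : W.Nonempty) :
    ∃ V, IsOpen V ∧ V.Nonempty ∧ ρ.fixingSubgroup W < ρ.fixingSubgroup V := by
  obtain ⟨δ, hδ, hmove⟩ := hmin.exists_image_ball_subset heqc hW hne
  simp only [IsLocallyQuasiAnalytic, not_exists, not_and, not_forall] at hρ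
  obtain ⟨U, -, ⟨y, hy⟩, hdiam, V, hVU, hVo, hVne, g, -, hgV, x, hxU, hgx⟩ := hρ δ hδ
  obtain ⟨h, hh⟩ := hmove y
  have hUW : ρ h '' U ⊆ W := .trans (image_mono fun u hu => Metric.mem_ball.2 <|
    (Metric.dist_le_diam_of_mem Metric.isBounded_of_compactSpace hu hy).trans_lt hdiam) hh
  have hVW := (image_mono hVU).trans hUW
  refine ⟨ρ h '' V, (ρ h).isOpen_image.2 hVo, hVne.image _,
    lt_of_le_not_ge (ρ.fixingSubgroup_antitone hVW) fun hle => hgx ?_⟩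
  have hconj := ρ.fixingSubgroup_antitone hUW <|
    hle ((ρ.conj_mem_fixingSubgroup_image_iff h).2 hgV)
  exact (ρ.conj_mem_fixingSubgroup_image_iff h).1 hconj x hxU

end CantorActions

theorem locallyQuasiAnalytic_of_topologicallyNoetherian_general
    {G : Type*} [Group G] [TopologicalSpace G]
    (hNoeth : TopologicallyNoetherian G)
    {X : Type*} [MetricSpace X] [CompactSpace X] [Nonempty X]
    (ρ : G →* (X ≃ₜ X)) (hcont : Continuous fun p : G × X => ρ p.1 p.2)
    (hmin : IsMinimalAction ρ) (heqc : IsEquicontinuousAction ρ) :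
    IsLocallyQuasiAnalytic ρ := by
  by_contra hρ
  have hclosed : ∀ S, IsClosed (ρ.fixingSubgroup S : Set G) :=
    ρ.isClosed_fixingSubgroup fun x => hcont.comp (Continuous.prodMk_left x)
  obtain ⟨_, hmax⟩ :=
    hNoeth.exists_maximal (S := ρ.fixingSubgroup '' {W | IsOpen W ∧ W.Nonempty})
      (forall_mem_image.2 fun W _ => hclosed W)
      ⟨_, mem_image_of_mem _ ⟨isOpen_univ, univ_nonempty⟩⟩
  obtain ⟨W, ⟨hWo, hWne⟩, rfl⟩ := hmax.prop
  obtain ⟨V, hVo, hVne, hlt⟩ :=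
    exists_fixingSubgroup_lt_of_not_isLocallyQuasiAnalytic hmin heqc hρ hWo hWne
  exact hmax.not_gt ⟨V, ⟨hVo, hVne⟩, rfl⟩ hlt

/-- A continuous minimal equicontinuous action of a topologically
Noetherian profinite group on a Cantor space is locally quasi-analytic. -/
theorem locallyQuasiAnalytic_of_topologicallyNoetherian
    {G : Type*} [Group G] [TopologicalSpace G] [IsTopologicalGroup G]
    [CompactSpace G] [T2Space G] [TotallyDisconnectedSpace G]
    (hNoeth : TopologicallyNoetherian G)
    {X : Type*} [MetricSpace X] [CompactSpace X] [Nonempty X] [TotallyDisconnectedSpace X]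
    (hperf : Perfect (Set.univ : Set X))
    (ρ : G →* (X ≃ₜ X)) (hcont : Continuous fun p : G × X => ρ p.1 p.2)
    (hmin : IsMinimalAction ρ) (heqc : IsEquicontinuousAction ρ) :
    IsLocallyQuasiAnalytic ρ :=
  locallyQuasiAnalytic_of_topologicallyNoetherian_general hNoeth ρ hcont hmin heqc
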